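/- Let n be a positive integer and let Z be an n×n lower unitriangular matrix over a field (lower triangular with all diagonal entries 1), and let P be a permutation matrix such that P·Z·P⁻¹ is upper unitriangular. Then Z is uniquely determined by A = Z⁻¹·P·Z in the following sense: if Z' is another lower unitriangular matrix with P'·Z'·P'⁻¹ upper unitriangular for some permutation matrix P', and Z'⁻¹·P'·Z' = A, then P' = P and Z' = Z. -/

import Mathlib

/-!
Put `Y = Z' Z⁻¹`; it is lower unitriangular and `P' Y = Y P`. Comparing the `(i, σ i)`
entries gives `Y (σ' i) (σ i) = Y i i = 1`, so `σ i ≤ σ' i` for every `i`, and a permutation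
of a finite order that moves no point downwards is the identity: `σ' = σ`. Then `Y` commutes
with `P`, so `Y = P Y P⁻¹ = (P Z' P⁻¹) (P Z P⁻¹)⁻¹` is also upper triangular, hence `Y = 1`.
-/

open Matrix

namespace Equiv.Perm

theorem eq_one_of_forall_le_apply {α : Type*} [PartialOrder α] [Finite α] {π : Perm α}
    (h : ∀ x, x ≤ π x) : π = 1 := by
  have le_pow_apply : ∀ k x, x ≤ (π ^ k) x := by
    intro k
    induction k with
    | zero => exact fun x => le_rfl
    | succ k ih => exact fun x => (ih x).trans (by rw [pow_succ', mul_apply]; exact h _)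
  ext x
  refine le_antisymm ?_ (h x)
  calc π x ≤ (π ^ (orderOf π - 1)) (π x) := le_pow_apply _ _
    _ = (π ^ orderOf π) x := by
      rw [← mul_apply, ← pow_succ, Nat.sub_add_cancel (orderOf_pos π)]
    _ = x := by rw [pow_orderOf_eq_one]; rfl

end Equiv.Perm

namespace Matrix

variable {m R : Type*}

theorem permMatrix_mul_mul_permMatrix_inv [Fintype m] [DecidableEq m] [NonAssocSemiring R]
    (σ : Equiv.Perm m) (M : Matrix m m R) :
    σ.permMatrix R * M * (σ⁻¹).permMatrix R = M.submatrix σ σ := by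
  rw [PEquiv.toMatrix_toPEquiv_mul, PEquiv.mul_toMatrix_toPEquiv]
  rfl

theorem isUpperTriangular_permMatrix_mul_mul_permMatrix_inv_iff [Fintype m] [DecidableEq m]
    [LinearOrder m] [NonAssocSemiring R] (σ : Equiv.Perm m) (M : Matrix m m R) :
    (σ.permMatrix R * M * (σ⁻¹).permMatrix R).IsUpperTriangular ↔
      M.BlockTriangular σ.symm := by
  rw [permMatrix_mul_mul_permMatrix_inv]
  exact blockTriangular_reindex_iff (b := id) (e := σ.symm)

theorem BlockTriangular.diag_mul {α : Type*} [LinearOrder α] [Fintype m]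
    [NonUnitalNonAssocSemiring R] {M N : Matrix m m R} {b : m → α}
    (hM : M.BlockTriangular b) (hN : N.BlockTriangular b) (hb : Function.Injective b) :
    (M * N).diag = M.diag * N.diag := by
  ext i
  refine (Finset.sum_eq_single i (fun k _ hki => ?_) (by simp)).trans rfl
  rcases (hb.ne hki).lt_or_gt with hlt | hlt
  · exact mul_eq_zero_of_left (hM hlt) _
  · exact mul_eq_zero_of_right _ (hN hlt)

theorem IsUpperTriangular.eq_diagonal [LinearOrder m] [DecidableEq m] [Zero R]
    {M : Matrix m m R} (hU : M.IsUpperTriangular) (hL : M.IsLowerTriangular) :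
    M = diagonal M.diag := by
  ext i j
  rcases lt_trichotomy i j with hij | rfl | hij
  · rw [hL (show OrderDual.toDual j < OrderDual.toDual i from hij), diagonal_apply_ne _ hij.ne]
  · simp
  · rw [hU hij, diagonal_apply_ne _ hij.ne']

theorem eq_of_permMatrix_mul_eq_mul_permMatrix [Fintype m] [DecidableEq m] [LinearOrder m]
    [NonAssocSemiring R] {Y : Matrix m m R} (hY : Y.IsLowerTriangular) (hdiag : ∀ i, Y i i ≠ 0)
    {σ τ : Equiv.Perm m} (h : τ.permMatrix R * Y = Y * σ.permMatrix R) : τ = σ := by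
  rw [PEquiv.toMatrix_toPEquiv_mul, PEquiv.mul_toMatrix_toPEquiv] at h
  have hle : ∀ i, σ i ≤ τ i := fun i => by
    have hentry : Y (τ i) (σ i) = Y i i := by simpa using congr_fun₂ h i (σ i)
    exact not_lt.mp fun hlt => hdiag i (hentry ▸ hY hlt)
  have := Equiv.Perm.eq_one_of_forall_le_apply (π := τ * σ⁻¹) fun x => by
    simpa using hle (σ⁻¹ x)
  exact mul_inv_eq_one.mp this

end Matrix

theorem bruhat_uniqueness_general {n : ℕ} {K : Type*} [Field K]
    (Z Z' : Matrix (Fin n) (Fin n) K) (σ σ' : Equiv.Perm (Fin n))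
    (hZlow : ∀ i j : Fin n, i < j → Z i j = 0) (hZdiag : ∀ i, Z i i = 1)
    (hZ'low : ∀ i j : Fin n, i < j → Z' i j = 0) (hZ'diag : ∀ i, Z' i i = 1)
    (hUp : ∀ i j : Fin n, j < i →
      (σ.permMatrix K * Z * (σ⁻¹).permMatrix K) i j = 0)
    (hUp' : ∀ i j : Fin n, j < i →
      (σ'.permMatrix K * Z' * (σ'⁻¹).permMatrix K) i j = 0)
    (hA : Z'⁻¹ * σ'.permMatrix K * Z' = Z⁻¹ * σ.permMatrix K * Z) :
    σ' = σ ∧ Z' = Z := by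
  have hZ : Z.IsLowerTriangular := fun i j h => hZlow i j h
  have hZ' : Z'.IsLowerTriangular := fun i j h => hZ'low i j h
  have hZσ : Z.BlockTriangular σ.symm :=
    (isUpperTriangular_permMatrix_mul_mul_permMatrix_inv_iff σ Z).mp fun i j h => hUp i j h
  have hZ'σ : Z'.BlockTriangular σ'.symm :=
    (isUpperTriangular_permMatrix_mul_mul_permMatrix_inv_iff σ' Z').mp fun i j h => hUp' i j h
  have : Invertible Z := invertibleOfIsUnitDet Z (by simp [det_of_isLowerTriangular Z hZ, hZdiag])
  have : Invertible Z' :=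
    invertibleOfIsUnitDet Z' (by simp [det_of_isLowerTriangular Z' hZ', hZ'diag])
  set Y := Z' * Z⁻¹ with hYdef
  have hY : Y.IsLowerTriangular := hZ'.mul (blockTriangular_inv_of_blockTriangular hZ)
  have hYdiag : ∀ i, Y i i = 1 := fun i => by
    have := congr_fun (hY.diag_mul hZ OrderDual.toDual.injective) i
    simpa [hYdef, hZdiag, hZ'diag] using this.symm
  have hcomm : σ'.permMatrix K * Y = Y * σ.permMatrix K := by
    simpa [hYdef, Matrix.mul_assoc] using congr_arg (fun M => Z' * M * Z⁻¹) hA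
  obtain rfl : σ' = σ := eq_of_permMatrix_mul_eq_mul_permMatrix hY (by simp [hYdiag]) hcomm
  have hYσ : σ'.permMatrix K * Y * (σ'⁻¹).permMatrix K = Y := by
    rw [hcomm, Matrix.mul_assoc, ← permMatrix_mul, inv_mul_cancel, permMatrix_one, Matrix.mul_one]
  have hYup : Y.IsUpperTriangular :=
    hYσ ▸ (isUpperTriangular_permMatrix_mul_mul_permMatrix_inv_iff σ' Y).mpr
      (hZ'σ.mul (blockTriangular_inv_of_blockTriangular hZσ))
  have hY1 : Y = 1 := by
    rw [hYup.eq_diagonal hY, ← diagonal_one]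
    exact congr_arg _ (funext hYdiag)
  exact ⟨rfl, by simpa [hYdef] using congr_arg (· * Z) hY1⟩

/-- Uniqueness of the Bruhat-type decomposition: a lower unitriangular matrix `Z`
with `P·Z·P⁻¹` upper unitriangular is uniquely determined by `A = Z⁻¹·P·Z`. -/
theorem bruhat_uniqueness {n : ℕ} {K : Type*} [Field K]
    (Z Z' : Matrix (Fin n) (Fin n) K) (σ σ' : Equiv.Perm (Fin n))
    (hZlow : ∀ i j : Fin n, i < j → Z i j = 0) (hZdiag : ∀ i, Z i i = 1)
    (hZ'low : ∀ i j : Fin n, i < j → Z' i j = 0) (hZ'diag : ∀ i, Z' i i = 1)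
    (hUp : ∀ i j : Fin n, j < i →
      (σ.permMatrix K * Z * (σ⁻¹).permMatrix K) i j = 0)
    (hUpd : ∀ i, (σ.permMatrix K * Z * (σ⁻¹).permMatrix K) i i = 1)
    (hUp' : ∀ i j : Fin n, j < i →
      (σ'.permMatrix K * Z' * (σ'⁻¹).permMatrix K) i j = 0)
    (hUpd' : ∀ i, (σ'.permMatrix K * Z' * (σ'⁻¹).permMatrix K) i i = 1)
    (hA : Z'⁻¹ * σ'.permMatrix K * Z' = Z⁻¹ * σ.permMatrix K * Z) :
    σ' = σ ∧ Z' = Z :=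
  bruhat_uniqueness_general Z Z' σ σ' hZlow hZdiag hZ'low hZ'diag hUp hUp' hA
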